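/- Let Q, R ∈ 𝒟 and r ≥ n. Then for the weighted paraproduct Π^μ = Π^μ_𝕊 and all weighted Haar functions h^μ_Q, h^ν_R: (1) if ℓ(R) ≥ 2^{−r}ℓ(Q) then ⟨Π^μ h^μ_Q, h^ν_R⟩_ν = 0; (2) if R ⊄ Q then ⟨Π^μ h^μ_Q, h^ν_R⟩_ν = 0; (3) if ℓ(R) < 2^{−r}ℓ(Q) then ⟨Π^μ h^μ_Q, h^ν_R⟩_ν = ⟨𝕊_μ h^μ_Q, h^ν_R⟩_ν, and in particular both sides vanish when R ⊄ Q. -/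

import Mathlib

open MeasureTheory Set
open scoped ENNReal NNReal Classical

noncomputable section

/-- The translation parameter space `Ω = ({0,1}^d)^ℤ` for random dyadic lattices. -/
abbrev TransParam (d : ℕ) := ℤ → Fin d → Bool

/-- A dyadic cube: scale `k` (side length `2^k`) and integer position `m`. -/
structure DyadicCube (d : ℕ) where
  k : ℤ
  m : Fin d → ℤ

namespace DyadicCube

variable {d : ℕ}

/-- The translation vector `Σ_{j<k} ω_j 2^j` of the lattice `𝒟_ω` at generation `k`. -/
def shiftVec (ω : TransParam d) (k : ℤ) (i : Fin d) : ℝ :=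
  ∑' j : {j : ℤ // j < k}, if ω j.1 i then (2:ℝ) ^ (j.1 : ℤ) else 0

/-- The point set of the cube `Q` in the translated dyadic lattice `𝒟_ω`. -/
def set (ω : TransParam d) (Q : DyadicCube d) : Set (Fin d → ℝ) :=
  {x | ∀ i, (Q.m i : ℝ) * 2 ^ Q.k + shiftVec ω Q.k i ≤ x i ∧
            x i < ((Q.m i : ℝ) + 1) * 2 ^ Q.k + shiftVec ω Q.k i}

/-- Side length `ℓ(Q) = 2^k`. -/
def len (Q : DyadicCube d) : ℝ := 2 ^ Q.k

/-- Volume `|Q| = ℓ(Q)^d`. -/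
def vol (Q : DyadicCube d) : ℝ := ((2:ℝ) ^ Q.k) ^ d

/-- The dyadic cube of generation `k` of `𝒟_ω` containing the point `x`. -/
def cubeAt (ω : TransParam d) (k : ℤ) (x : Fin d → ℝ) : DyadicCube d :=
  ⟨k, fun i => ⌊(x i - shiftVec ω k i) / 2 ^ k⌋⟩

/-- The average of `f` on `Q` with respect to `μ` (zero if `μ(Q)` is zero or infinite). -/
def avg (ω : TransParam d) (μ : Measure (Fin d → ℝ)) (Q : DyadicCube d)
    (f : (Fin d → ℝ) → ℝ) : ℝ :=
  ((μ (Q.set ω)).toReal)⁻¹ * ∫ x in Q.set ω, f x ∂μ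

/-- The conditional expectation `E^μ_Q f`. -/
def eproj (ω : TransParam d) (μ : Measure (Fin d → ℝ)) (Q : DyadicCube d)
    (f : (Fin d → ℝ) → ℝ) : (Fin d → ℝ) → ℝ :=
  fun x => if x ∈ Q.set ω then avg ω μ Q f else 0

/-- The martingale difference `Δ^μ_Q f = -E^μ_Q f + Σ_{J ∈ ch(Q)} E^μ_J f`. -/
def mdiff (ω : TransParam d) (μ : Measure (Fin d → ℝ)) (Q : DyadicCube d)
    (f : (Fin d → ℝ) → ℝ) : (Fin d → ℝ) → ℝ :=
  fun x => if x ∈ Q.set ω then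
      avg ω μ (cubeAt ω (Q.k - 1) x) f - avg ω μ Q f
    else 0

end DyadicCube

/-- `h` takes equal values at points lying in the same generation-`k` cube of `𝒟_ω`. -/
def ConstOnScale {d : ℕ} (ω : TransParam d) (k : ℤ) (h : (Fin d → ℝ) → ℝ) : Prop :=
  ∀ x y : Fin d → ℝ, DyadicCube.cubeAt ω k x = DyadicCube.cubeAt ω k y → h x = h y

/-- A generalized Haar function for `Q`: supported on `Q` and constant on the children of `Q`. -/
def IsGenHaar {d : ℕ} (ω : TransParam d) (Q : DyadicCube d) (h : (Fin d → ℝ) → ℝ) : Prop :=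
  (∀ x ∉ Q.set ω, h x = 0) ∧ ConstOnScale ω (Q.k - 1) h

/-- A `μ`-weighted Haar function for `Q`: an element of the range of `Δ^μ_Q` in `L²(μ)`,
i.e. supported on `Q`, constant on the children of `Q`, with `μ`-mean zero. -/
def IsWeightedHaar {d : ℕ} (ω : TransParam d) (μ : Measure (Fin d → ℝ)) (Q : DyadicCube d)
    (h : (Fin d → ℝ) → ℝ) : Prop :=
  IsGenHaar ω Q h ∧ (∫ x, h x ∂μ) = 0 ∧ MemLp h 2 μ

/-- An elementary generalized dyadic shift with parameters `mm`, `nn` on the lattice `𝒟_ω`: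
for each cube `Q` (in `cubes`) and each pair `Q' Q'' ⊆ Q` with `ℓ(Q') = 2^{-mm} ℓ(Q)`,
`ℓ(Q'') = 2^{-nn} ℓ(Q)`, a pair of generalized Haar functions `h1 Q Q' Q''` (for `Q'`)
and `h2 Q Q' Q''` (for `Q''`) with `‖h1‖_∞ ⬝ ‖h2‖_∞ ≤ 1`. -/
structure ElemShift (d : ℕ) (ω : TransParam d) (mm nn : ℕ) where
  cubes : Set (DyadicCube d)
  h1 : DyadicCube d → DyadicCube d → DyadicCube d → (Fin d → ℝ) → ℝ
  h2 : DyadicCube d → DyadicCube d → DyadicCube d → (Fin d → ℝ) → ℝ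
  haar1 : ∀ Q Q' Q'', IsGenHaar ω Q' (h1 Q Q' Q'')
  haar2 : ∀ Q Q' Q'', IsGenHaar ω Q'' (h2 Q Q' Q'')
  normBound : ∀ Q Q' Q'' x y, |h2 Q Q' Q'' x| * |h1 Q Q' Q'' y| ≤ 1

namespace ElemShift

variable {d : ℕ} {ω : TransParam d} {mm nn : ℕ}

/-- The kernel `a_Q(x,y) = Σ_{Q',Q''} h_{Q''}^{Q'}(x) h_{Q'}^{Q''}(y)` (so `‖a_Q‖_∞ ≤ 1`);
only the pair `Q' ∋ y`, `Q'' ∋ x` of the prescribed generations contributes. -/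
def kernelAt (S : ElemShift d ω mm nn) (Q : DyadicCube d) (x y : Fin d → ℝ) : ℝ :=
  if Q ∈ S.cubes ∧
     (DyadicCube.cubeAt ω (Q.k - mm) y).set ω ⊆ Q.set ω ∧
     (DyadicCube.cubeAt ω (Q.k - nn) x).set ω ⊆ Q.set ω then
    S.h2 Q (DyadicCube.cubeAt ω (Q.k - mm) y) (DyadicCube.cubeAt ω (Q.k - nn) x) x *
      S.h1 Q (DyadicCube.cubeAt ω (Q.k - mm) y) (DyadicCube.cubeAt ω (Q.k - nn) x) y
  else 0

/-- The full kernel `A(x,y) = Σ_Q |Q|⁻¹ a_Q(x,y)`. -/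
def kernel (S : ElemShift d ω mm nn) (x y : Fin d → ℝ) : ℝ :=
  ∑' Q : DyadicCube d, (DyadicCube.vol Q)⁻¹ * S.kernelAt Q x y

/-- `𝕊_μ f (x) = ∫ A(x,y) f(y) dμ(y)`. -/
def op (S : ElemShift d ω mm nn) (μ : Measure (Fin d → ℝ)) (f : (Fin d → ℝ) → ℝ) :
    (Fin d → ℝ) → ℝ :=
  fun x => ∫ y, S.kernel x y * f y ∂μ

/-- `𝕊^*_ν g (y) = ∫ A(x,y) g(x) dν(x)`. -/
def opStar (S : ElemShift d ω mm nn) (ν : Measure (Fin d → ℝ)) (g : (Fin d → ℝ) → ℝ) :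
    (Fin d → ℝ) → ℝ :=
  fun y => ∫ x, S.kernel x y * g x ∂ν

/-- The restricted shift `𝕊_𝒜`, keeping only the cubes in `𝒜`. -/
def opRestr (S : ElemShift d ω mm nn) (𝒜 : Set (DyadicCube d)) (μ : Measure (Fin d → ℝ))
    (f : (Fin d → ℝ) → ℝ) : (Fin d → ℝ) → ℝ :=
  fun x => ∫ y, (∑' Q : DyadicCube d,
    if Q ∈ 𝒜 then (DyadicCube.vol Q)⁻¹ * S.kernelAt Q x y else 0) * f y ∂μ

/-- The shift is ordinary (non-generalized): all its Haar functions have mean zero. -/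
def Ordinary (S : ElemShift d ω mm nn) : Prop :=
  ∀ Q Q' Q'', (∫ x, S.h1 Q Q' Q'' x) = 0 ∧ (∫ x, S.h2 Q Q' Q'' x) = 0

end ElemShift

/-- The axis-parallel cube with corner `c` and side length `ℓ`. -/
def stdCube {d : ℕ} (c : Fin d → ℝ) (ℓ : ℝ) : Set (Fin d → ℝ) :=
  {x | ∀ i, c i ≤ x i ∧ x i < c i + ℓ}

/-- `A` is an `A₂` bound for the weight `w`:
`(|Q|⁻¹∫_Q w)(|Q|⁻¹∫_Q w⁻¹) ≤ A` for all cubes `Q`. -/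
def A2BoundOn {d : ℕ} (w : (Fin d → ℝ) → ℝ) (A : ℝ) : Prop :=
  ∀ (c : Fin d → ℝ) (ℓ : ℝ), 0 < ℓ →
    (∫⁻ x in stdCube c ℓ, ENNReal.ofReal (w x)) *
      (∫⁻ x in stdCube c ℓ, ENNReal.ofReal ((w x)⁻¹)) ≤
      ENNReal.ofReal A * ENNReal.ofReal (ℓ ^ d) * ENNReal.ofReal (ℓ ^ d)

/-- `A` is a joint `A₂` bound for the pair of measures `μ`, `ν`:
`(μ(I)/|I|)(ν(I)/|I|) ≤ A` for all cubes `I`. -/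
def JointA2 {d : ℕ} (μ ν : Measure (Fin d → ℝ)) (A : ℝ) : Prop :=
  ∀ (c : Fin d → ℝ) (ℓ : ℝ), 0 < ℓ →
    μ (stdCube c ℓ) * ν (stdCube c ℓ) ≤
      ENNReal.ofReal A * ENNReal.ofReal (ℓ ^ d) * ENNReal.ofReal (ℓ ^ d)

/-- Distance between two sets. -/
def setDist {α : Type*} [PseudoMetricSpace α] (S T : Set α) : ℝ :=
  sInf ((fun p : α × α => dist p.1 p.2) '' (S ×ˢ T))

/-- The long distance `D(Q,R) = dist(Q,R) + ℓ(Q) + ℓ(R)`. -/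
def longDist {d : ℕ} (ω : TransParam d) (Q R : DyadicCube d) : ℝ :=
  setDist (Q.set ω) (R.set ω) + Q.len + R.len

/-- A cube `Q ∈ 𝒟_ω` is bad (with parameters `r₀`, `γ`) if there is a much bigger cube
`R ∈ 𝒟_ω` with `dist(Q,R) < ℓ(Q)^γ ℓ(R)^{1-γ}`. -/
def IsBad {d : ℕ} (r₀ : ℕ) (γ : ℝ) (ω : TransParam d) (Q : DyadicCube d) : Prop :=
  ∃ R : DyadicCube d, Q.k + (r₀ : ℤ) < R.k ∧
    setDist (Q.set ω) (R.set ω) < Q.len ^ γ * R.len ^ (1 - γ)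

/-- `P` is the product over `ℤ` of uniform measures on `{0,1}^d`. -/
def IsBernoulliProduct {d : ℕ} (P : Measure (TransParam d)) : Prop :=
  IsProbabilityMeasure P ∧
  ∀ (F : Finset (ℤ × Fin d)) (b : ℤ × Fin d → Bool),
    P {ω | ∀ p ∈ F, ω p.1 p.2 = b p} = (1 / 2 : ℝ≥0∞) ^ F.card

/-- A Calderón–Zygmund operator on `ℝ^d` with parameters `Ccz`, `α` and unweighted
`L²` norm at most `normT`. -/
structure CZO (d : ℕ) (Ccz α normT : ℝ) where
  T : ((Fin d → ℝ) → ℝ) →ₗ[ℝ] ((Fin d → ℝ) → ℝ)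
  K : (Fin d → ℝ) → (Fin d → ℝ) → ℝ
  l2bound : ∀ f, eLpNorm (T f) 2 volume ≤ ENNReal.ofReal normT * eLpNorm f 2 volume
  size : ∀ x y, x ≠ y → |K x y| ≤ Ccz / dist x y ^ d
  smooth : ∀ x x' y : Fin d → ℝ, dist x x' < dist x y / 2 →
    |K x y - K x' y| + |K y x - K y x'| ≤ Ccz * dist x x' ^ α / dist x y ^ ((d : ℝ) + α)
  repr : ∀ f : (Fin d → ℝ) → ℝ, Measurable f → HasCompactSupport f →
    (∃ M, ∀ y, |f y| ≤ M) → ∀ x ∉ tsupport f, T f x = ∫ y, K x y * f y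


/-- The weighted paraproduct `Π^μ = Π^μ_𝕊 : L²(μ) → L²(ν)`,
`Π^μ f = Σ_{Q∈𝒟} (E^μ_Q f) Σ_{R ⊆ Q, ℓ(R)=2^{-r}ℓ(Q)} Δ^ν_R 𝕊_μ 1_Q`. -/
def shiftPara {d : ℕ} {ω : TransParam d} {mm nn : ℕ} (S : ElemShift d ω mm nn)
    (μ ν : Measure (Fin d → ℝ)) (r : ℕ) (f : (Fin d → ℝ) → ℝ) : (Fin d → ℝ) → ℝ :=
  fun x => ∑' Q : DyadicCube d,
    DyadicCube.eproj ω μ Q f x *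
      DyadicCube.mdiff ω ν (DyadicCube.cubeAt ω (Q.k - r) x)
        (S.op μ (Set.indicator (Q.set ω) fun _ => (1:ℝ))) x

/-- The density `w(Q)/|Q|` of the weight `w` on the cube `Q`. -/
def dens {d : ℕ} (ω : TransParam d) (w : (Fin d → ℝ) → ℝ) (Q : DyadicCube d) : ℝ :=
  (∫ x in Q.set ω, w x) / Q.vol

/-- The maximal cubes `Q' ∈ 𝒬`, `Q' ⊆ Q`, with `w(Q')/|Q'| > 4 w(Q)/|Q|`:
the stopping children of `Q`. -/
def stopNext {d : ℕ} (ω : TransParam d) (w : (Fin d → ℝ) → ℝ) (𝒬 : Set (DyadicCube d))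
    (Q : DyadicCube d) : Set (DyadicCube d) :=
  {Q' | (Q' ∈ 𝒬 ∧ Q'.set ω ⊆ Q.set ω ∧ 4 * dens ω w Q < dens ω w Q') ∧
    ∀ Q'' : DyadicCube d, Q'' ∈ 𝒬 → Q''.set ω ⊆ Q.set ω → 4 * dens ω w Q < dens ω w Q'' →
      Q'.set ω ⊆ Q''.set ω → Q''.set ω ⊆ Q'.set ω}

/-- The generations of stopping cubes: `𝒢*₀ = {Q₀}`, and `𝒢*_{τ+1}` consists of the
stopping children of the cubes of `𝒢*_τ`. -/
def stopGen {d : ℕ} (ω : TransParam d) (w : (Fin d → ℝ) → ℝ) (𝒬 : Set (DyadicCube d))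
    (Q₀ : DyadicCube d) : ℕ → Set (DyadicCube d)
  | 0 => {Q₀}
  | (τ + 1) => {Q' | ∃ Q ∈ stopGen ω w 𝒬 Q₀ τ, Q' ∈ stopNext ω w 𝒬 Q}

/-- The stopping family `𝒢* = 𝒢*(Q₀) = ∪_τ 𝒢*_τ`. -/
def stopFam {d : ℕ} (ω : TransParam d) (w : (Fin d → ℝ) → ℝ) (𝒬 : Set (DyadicCube d))
    (Q₀ : DyadicCube d) : Set (DyadicCube d) :=
  ⋃ τ : ℕ, stopGen ω w 𝒬 Q₀ τ

/-- `𝒫(R) = 𝒬(R) \ ∪_{R'∈𝒢*, R'⊊R} 𝒬(R')`. -/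
def stopP {d : ℕ} (ω : TransParam d) (w : (Fin d → ℝ) → ℝ) (𝒬 : Set (DyadicCube d))
    (Q₀ R : DyadicCube d) : Set (DyadicCube d) :=
  {Q | Q ∈ 𝒬 ∧ Q.set ω ⊆ R.set ω ∧
    ∀ R' ∈ stopFam ω w 𝒬 Q₀, R'.set ω ⊂ R.set ω → ¬ Q.set ω ⊆ R'.set ω}

/-- The good part `f_{good,ω} = Σ_{I ∈ 𝒟_ω, I good} Δ_I f` of a function. -/
def goodPart {d : ℕ} (r₀ : ℕ) (γ : ℝ) (ω : TransParam d) (f : (Fin d → ℝ) → ℝ) :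
    (Fin d → ℝ) → ℝ :=
  fun x => ∑' k : ℤ,
    if IsBad r₀ γ ω (DyadicCube.cubeAt ω k x) then 0
    else DyadicCube.mdiff ω volume (DyadicCube.cubeAt ω k x) f x

/-- Conditioning: keep the coordinates `ω_j`, `j < k`, from `τ` and take the coordinates
`ω_j`, `j ≥ k`, from `ω`. -/
def splice {d : ℕ} (τ ω : TransParam d) (k : ℤ) : TransParam d :=
  fun j => if j < k then τ j else ω j

/-- The event `A` depends only on the coordinates `ω_j`, `j < k`. -/
def DependsOnPast {d : ℕ} (k : ℤ) (A : Set (TransParam d)) : Prop :=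
  ∀ ω ω' : TransParam d, (∀ j < k, ω j = ω' j) → (ω ∈ A ↔ ω' ∈ A)

/-- `U` is a generalized dyadic shift with parameters `mm`, `nn` on the lattice `𝒟_ω`:
a sum of at most `4^d` elementary generalized dyadic shifts. -/
def IsGenShiftOp {d : ℕ} (ω : TransParam d) (mm nn : ℕ)
    (U : ((Fin d → ℝ) → ℝ) → ((Fin d → ℝ) → ℝ)) : Prop :=
  ∃ L : List (ElemShift d ω mm nn), L.length ≤ 4 ^ d ∧
    ∀ f x, U f x = (L.map fun S => S.op volume f x).sum

/-- `U` is an ordinary (non-generalized) dyadic shift with parameters `mm`, `nn`: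
a sum of at most `4^d` elementary dyadic shifts built from mean-zero Haar functions. -/
def IsOrdShiftOp {d : ℕ} (ω : TransParam d) (mm nn : ℕ)
    (U : ((Fin d → ℝ) → ℝ) → ((Fin d → ℝ) → ℝ)) : Prop :=
  ∃ L : List (ElemShift d ω mm nn), L.length ≤ 4 ^ d ∧ (∀ S ∈ L, S.Ordinary) ∧
    ∀ f x, U f x = (L.map fun S => S.op volume f x).sum

/-- The dyadic paraproduct `Π f = Σ_Q (E_Q f) b_Q` with symbol `b = (b_Q)_Q = (Δ_Q T1)_Q`. -/
def paraOp {d : ℕ} (ω : TransParam d) (b : DyadicCube d → (Fin d → ℝ) → ℝ)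
    (f : (Fin d → ℝ) → ℝ) : (Fin d → ℝ) → ℝ :=
  fun x => ∑' Q : DyadicCube d, DyadicCube.eproj ω volume Q f x * b Q x

/-- The adjoint `Π^*` of the dyadic paraproduct with symbol `b`:
`Π^* f = Σ_Q 1_Q |Q|⁻¹ ∫ f b_Q`. -/
def paraOpAdj {d : ℕ} (ω : TransParam d) (b : DyadicCube d → (Fin d → ℝ) → ℝ)
    (f : (Fin d → ℝ) → ℝ) : (Fin d → ℝ) → ℝ :=
  fun x => ∑' Q : DyadicCube d,
    Set.indicator (Q.set ω) (fun _ => (1:ℝ)) x * (DyadicCube.vol Q)⁻¹ * (∫ y, f y * b Q y)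

/-- `b = (b_Q)_Q` is the family `(Δ_Q T1)_Q` for the operator with adjoint `Tadj`:
each `b_Q` is supported on `Q`, constant on the children of `Q`, has mean zero, and
satisfies the duality relation `⟨b_Q, g⟩ = ⟨1, Tadj Δ_Q g⟩`. -/
def IsParaSymbol {d : ℕ} (ω : TransParam d)
    (Tadj : ((Fin d → ℝ) → ℝ) → ((Fin d → ℝ) → ℝ))
    (b : DyadicCube d → (Fin d → ℝ) → ℝ) : Prop :=
  ∀ Q : DyadicCube d, IsGenHaar ω Q (b Q) ∧ (∫ x, b Q x) = 0 ∧
    ∀ g : (Fin d → ℝ) → ℝ, Measurable g → HasCompactSupport g → (∃ M, ∀ y, |g y| ≤ M) →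
      (∫ x, b Q x * g x) = ∫ x, Tadj (DyadicCube.mdiff ω volume Q g) x

/-- `Tstar` is the adjoint of `T` on (unweighted) `L²`. -/
def IsAdjointPair {d : ℕ} (T Tstar : ((Fin d → ℝ) → ℝ) → ((Fin d → ℝ) → ℝ)) : Prop :=
  ∀ f g : (Fin d → ℝ) → ℝ, MemLp f 2 volume → MemLp g 2 volume →
    (∫ x, T f x * g x) = ∫ x, f x * Tstar g x

/-- `T̃_ω = T - Π^ω_T - (Π^ω_{T*})^*`, where `b` plays the role of `(Δ_Q T1)_Q` and
`bstar` the role of `(Δ_Q T^*1)_Q`. -/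
def tildeOp {d : ℕ} {Ccz α normT : ℝ} (Op : CZO d Ccz α normT) (ω : TransParam d)
    (b bstar : DyadicCube d → (Fin d → ℝ) → ℝ) (f : (Fin d → ℝ) → ℝ) : (Fin d → ℝ) → ℝ :=
  fun x => Op.T f x - paraOp ω b f x - paraOpAdj ω bstar f x


/-!
Split `Π^μ f` according to the side length `2^k` of the outer cube. Writing `E_j` for the
`ν`-averages over the dyadic cubes of side `2^j` and `F_k = Σ_{ℓ(P) = 2^k} 1_P (E^μ_P f) 𝕊_μ 1_P`,
the part of side `2^k` is `(E_{k-r-1} - E_{k-r}) F_k`. For `f = h^μ_Q` it vanishes when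
`2^k ≥ ℓ(Q)` and, almost everywhere, when `k` is so small that `F_k` is constant on the cubes of
side `2^{k-r}` (the shift is finite), so the pairing with `h = h^ν_R` is a finite sum. As `E_j` is
self-adjoint, reproduces `h` for `2^j < ℓ(R)` and annihilates it otherwise, only `k = k(R) + r`
survives: `⟨Π^μ h^μ_Q, h⟩_ν = ⟨h^μ_Q⟩_A ⟨𝕊_μ 1_A, h⟩_ν`, with `⟨h^μ_Q⟩_A` the `μ`-average of
`h^μ_Q` over the cube `A ⊇ R` of side `2^r ℓ(R)`. It vanishes unless `A ⊊ Q`, which gives (1)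
and (2). If `A ⊊ Q`, then `h^μ_Q` is constant on `A`, and since `r ≥ n` the shift of a function
vanishing on `A` is constant on `R`, hence orthogonal to `h`; so `⟨𝕊_μ h^μ_Q, h⟩_ν` is the same
expression, which gives (3).
-/

namespace DyadicCube

variable {d : ℕ} {ω : TransParam d}

instance : Countable (DyadicCube d) :=
  Function.Injective.countable (f := fun Q : DyadicCube d => (Q.k, Q.m))
    fun a b h => by cases a; cases b; simpa using h

lemma summable_shiftVec_terms (b : ℤ → Bool) (k : ℤ) :
    Summable ((Iio k).indicator fun j => if b j then (2:ℝ) ^ j else 0) := by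
  refine Summable.of_nat_of_neg ?_ ?_
  · refine summable_of_ne_finset_zero (s := Finset.range k.toNat) fun n hn => ?_
    exact indicator_of_notMem (s := Iio k) (fun h : (n : ℤ) < k => hn (by simp; omega)) _
  · have hF : ∀ j : ℤ, 0 ≤ if b j then (2:ℝ) ^ j else 0 := fun j => by split_ifs <;> positivity
    refine Summable.of_nonneg_of_le (fun n => indicator_nonneg (fun j _ => hF j) _)
      (fun n => (indicator_le_self' (fun j _ => hF j) _).trans ?_) summable_geometric_two
    split_ifs
    · simp [zpow_neg]
    · positivity

lemma shiftVec_eq_tsum (k : ℤ) (i : Fin d) :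
    shiftVec ω k i = ∑' j, (Iio k).indicator (fun j => if ω j i then (2:ℝ) ^ j else 0) j :=
  tsum_subtype (Iio k) (fun j => if ω j i then (2:ℝ) ^ j else 0)

lemma shiftVec_succ (k : ℤ) (i : Fin d) :
    shiftVec ω (k + 1) i = shiftVec ω k i + if ω k i then 2 ^ k else 0 := by
  have hsum := ((summable_shiftVec_terms (ω · i) k).hasSum.add
    (hasSum_ite_eq k (if ω k i then (2:ℝ) ^ k else 0)))
  rw [shiftVec_eq_tsum, shiftVec_eq_tsum, ← hsum.tsum_eq]
  congr 1
  funext j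
  simp only [indicator, mem_Iio]
  rcases lt_trichotomy j k with h | rfl | h
  · simp [h, h.trans (lt_add_one k), h.ne]
  · simp
  · simp [h.ne', not_lt.2 h.le, show ¬ j < k + 1 by omega]

lemma cubeAt_succ (k : ℤ) (x : Fin d → ℝ) : cubeAt ω (k + 1) x =
    ⟨k + 1, fun i => ((cubeAt ω k x).m i - if ω k i then 1 else 0) / (2 : ℕ)⟩ := by
  have hk : (2:ℝ) ^ (k + 1) = 2 ^ k * (2 : ℕ) := by
    rw [zpow_add_one₀ two_ne_zero]; norm_num
  have harg : ∀ i, (x i - shiftVec ω (k + 1) i) / 2 ^ (k + 1) =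
      ((x i - shiftVec ω k i) / 2 ^ k - ((if ω k i then 1 else 0 : ℤ) : ℝ)) / (2 : ℕ) := by
    intro i
    rw [shiftVec_succ, hk]
    split_ifs <;> field_simp <;> ring
  simp only [cubeAt, mk.injEq, true_and]
  funext i
  rw [harg i, Int.floor_div_natCast, Int.floor_sub_intCast]

lemma cubeAt_eq_cubeAt_of_le {k k' : ℤ} (h : k ≤ k') {x y : Fin d → ℝ}
    (hxy : cubeAt ω k x = cubeAt ω k y) : cubeAt ω k' x = cubeAt ω k' y := by
  induction k', h using Int.leInduction with
  | base => exact hxy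
  | succ n _ ih => rw [cubeAt_succ, cubeAt_succ, ih]

lemma mem_cubeAt (k : ℤ) (x : Fin d → ℝ) : x ∈ (cubeAt ω k x).set ω := by
  intro i
  have hk : (0:ℝ) < 2 ^ k := zpow_pos two_pos k
  have h1 := Int.floor_le ((x i - shiftVec ω k i) / 2 ^ k)
  have h2 := Int.lt_floor_add_one ((x i - shiftVec ω k i) / 2 ^ k)
  rw [le_div_iff₀ hk] at h1
  rw [div_lt_iff₀ hk] at h2
  exact ⟨by simp only [cubeAt]; linarith, by simp only [cubeAt]; linarith⟩

lemma cubeAt_eq_of_mem {Q : DyadicCube d} {x : Fin d → ℝ} (hx : x ∈ Q.set ω) :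
    cubeAt ω Q.k x = Q := by
  obtain ⟨k, m⟩ := Q
  simp only [cubeAt, mk.injEq, true_and]
  funext i
  have hk : (0:ℝ) < 2 ^ k := zpow_pos two_pos k
  obtain ⟨h1, h2⟩ := hx i
  rw [Int.floor_eq_iff, le_div_iff₀ hk, div_lt_iff₀ hk]
  exact ⟨by linarith, by linarith⟩

lemma mem_cubeAt_iff {k : ℤ} {x y : Fin d → ℝ} :
    y ∈ (cubeAt ω k x).set ω ↔ cubeAt ω k y = cubeAt ω k x :=
  ⟨cubeAt_eq_of_mem, fun h => h ▸ mem_cubeAt k y⟩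

lemma cubeAt_eq_cubeAt_of_mem {R : DyadicCube d} {x y : Fin d → ℝ} {k : ℤ} (hx : x ∈ R.set ω)
    (hy : y ∈ R.set ω) (hk : R.k ≤ k) : cubeAt ω k x = cubeAt ω k y :=
  cubeAt_eq_cubeAt_of_le hk ((cubeAt_eq_of_mem hx).trans (cubeAt_eq_of_mem hy).symm)

lemma set_cubeAt_subset {k k' : ℤ} (h : k ≤ k') (x : Fin d → ℝ) :
    (cubeAt ω k x).set ω ⊆ (cubeAt ω k' x).set ω := fun _ hy =>
  mem_cubeAt_iff.2 (cubeAt_eq_cubeAt_of_le h (mem_cubeAt_iff.1 hy))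

lemma subset_or_disjoint {Q Q' : DyadicCube d} (h : Q.k ≤ Q'.k) :
    Q.set ω ⊆ Q'.set ω ∨ Disjoint (Q.set ω) (Q'.set ω) := by
  refine or_iff_not_imp_right.2 fun hQQ' => ?_
  obtain ⟨z, hzQ, hzQ'⟩ := not_disjoint_iff.1 hQQ'
  rw [← cubeAt_eq_of_mem hzQ, ← cubeAt_eq_of_mem hzQ']
  exact set_cubeAt_subset h z

def corner (ω : TransParam d) (Q : DyadicCube d) : Fin d → ℝ :=
  fun i => (Q.m i : ℝ) * 2 ^ Q.k + shiftVec ω Q.k i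

lemma corner_mem (Q : DyadicCube d) : corner ω Q ∈ Q.set ω := fun i =>
  ⟨le_rfl, by simp only [corner]; linarith [zpow_pos (two_pos (α := ℝ)) Q.k]⟩

lemma set_subset_set_cubeAt_corner (R : DyadicCube d) {k : ℤ} (hk : R.k ≤ k) :
    R.set ω ⊆ (cubeAt ω k (corner ω R)).set ω := by
  conv_lhs => rw [← cubeAt_eq_of_mem (corner_mem (ω := ω) R)]
  exact set_cubeAt_subset hk _

lemma monotone_cubeAt_m (k : ℤ) : Monotone fun x : Fin d → ℝ => (cubeAt ω k x).m :=
  fun _ _ hxy i => Int.floor_mono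
    (div_le_div_of_nonneg_right (sub_le_sub_right (hxy i) _) (zpow_pos two_pos k).le)

lemma set_eq_pi (Q : DyadicCube d) : Q.set ω = Set.pi univ fun i =>
    Ico ((Q.m i : ℝ) * 2 ^ Q.k + shiftVec ω Q.k i)
      (((Q.m i : ℝ) + 1) * 2 ^ Q.k + shiftVec ω Q.k i) := by
  ext x
  simp [DyadicCube.set, Set.mem_pi]

lemma measurableSet_set (Q : DyadicCube d) : MeasurableSet (Q.set ω) := by
  rw [set_eq_pi]
  exact MeasurableSet.univ_pi fun _ => measurableSet_Ico

lemma measure_set_lt_top (ν : Measure (Fin d → ℝ)) [IsLocallyFiniteMeasure ν]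
    (Q : DyadicCube d) : ν (Q.set ω) < ∞ := by
  have hQ : Bornology.IsBounded (Q.set ω) := by
    rw [set_eq_pi]
    exact Bornology.IsBounded.pi fun _ => Metric.isBounded_Ico _ _
  exact (measure_mono subset_closure).trans_lt hQ.isCompact_closure.measure_lt_top

lemma measurable_comp_cubeAt (k : ℤ) (φ : DyadicCube d → ℝ) :
    Measurable fun x : Fin d → ℝ => φ (cubeAt ω k x) := by
  change Measurable ((fun m => φ ⟨k, m⟩) ∘
    fun (x : Fin d → ℝ) (i : Fin d) => ⌊(x i - shiftVec ω k i) / 2 ^ k⌋)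
  refine (measurable_of_countable _).comp (measurable_pi_lambda _ fun i => ?_)
  exact (((measurable_pi_apply i).sub measurable_const).div measurable_const).floor

lemma pairwise_disjoint_set_mk (k : ℤ) :
    Pairwise (Function.onFun Disjoint fun m : Fin d → ℤ => (DyadicCube.mk k m).set ω) := by
  refine fun m m' hmm' => Set.disjoint_left.2 fun z hz hz' => hmm' ?_
  exact congrArg DyadicCube.m
    ((cubeAt_eq_of_mem hz).symm.trans (cubeAt_eq_of_mem (Q := ⟨k, m'⟩) hz'))

lemma iUnion_set_mk (k : ℤ) : (⋃ m : Fin d → ℤ, (DyadicCube.mk k m).set ω) = univ :=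
  eq_univ_of_forall fun x => mem_iUnion.2 ⟨_, mem_cubeAt k x⟩

lemma integral_eq_tsum_setIntegral_mk {ν : Measure (Fin d → ℝ)} (k : ℤ)
    {f : (Fin d → ℝ) → ℝ} (hf : Integrable f ν) :
    ∫ x, f x ∂ν = ∑' m : Fin d → ℤ, ∫ x in (DyadicCube.mk k m).set ω, f x ∂ν := by
  rw [← integral_iUnion (fun _ => measurableSet_set _) (pairwise_disjoint_set_mk k)
    (by rw [iUnion_set_mk]; exact hf.integrableOn), iUnion_set_mk, setIntegral_univ]

end DyadicCube

open DyadicCube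

section ConstOnScale

variable {d : ℕ} {ω : TransParam d} {k : ℤ} {f : (Fin d → ℝ) → ℝ}

lemma ConstOnScale.mono {k' : ℤ} (hf : ConstOnScale ω k f) (h : k' ≤ k) :
    ConstOnScale ω k' f :=
  fun x y hxy => hf x y (cubeAt_eq_cubeAt_of_le h hxy)

lemma ConstOnScale.eq_of_mem (hf : ConstOnScale ω k f) {C : DyadicCube d} (hC : C.k ≤ k)
    {x y : Fin d → ℝ}
    (hx : x ∈ C.set ω) (hy : y ∈ C.set ω) : f x = f y :=
  hf x y (cubeAt_eq_cubeAt_of_mem hx hy hC)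

lemma ConstOnScale.eq_comp_cubeAt (hf : ConstOnScale ω k f) :
    f = fun x => f (corner ω (cubeAt ω k x)) :=
  funext fun _ => hf _ _ (cubeAt_eq_of_mem (corner_mem _)).symm

lemma ConstOnScale.measurable (hf : ConstOnScale ω k f) : Measurable f := by
  rw [hf.eq_comp_cubeAt]
  exact measurable_comp_cubeAt k fun C => f (corner ω C)

end ConstOnScale

section GenHaar

variable {d : ℕ} {ω : TransParam d} {Q : DyadicCube d} {h : (Fin d → ℝ) → ℝ}

-- `h` takes finitely many values: the children of `Q` are indexed by the integer points of a box.
lemma IsGenHaar.exists_abs_le (hh : IsGenHaar ω Q h) : ∃ B, ∀ x, |h x| ≤ B := by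
  let top : Fin d → ℝ := fun i => corner ω Q i + 2 ^ Q.k
  obtain ⟨B, hB⟩ := ((Set.finite_Icc (cubeAt ω (Q.k - 1) (corner ω Q)).m
    (cubeAt ω (Q.k - 1) top).m).image fun m => |h (corner ω ⟨Q.k - 1, m⟩)|).bddAbove
  refine ⟨max B 0, fun x => ?_⟩
  by_cases hx : x ∈ Q.set ω
  · rw [hh.2.eq_comp_cubeAt]
    refine le_max_of_le_left (hB ⟨(cubeAt ω (Q.k - 1) x).m, ⟨?_, ?_⟩, rfl⟩)
    · exact monotone_cubeAt_m _ fun i => (hx i).1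
    · refine monotone_cubeAt_m _ fun i => ?_
      have := (hx i).2
      simp only [top, corner]
      linarith
  · rw [hh.1 x hx, abs_zero]
    exact le_max_right B 0

lemma IsGenHaar.integrable (hh : IsGenHaar ω Q h) (ν : Measure (Fin d → ℝ))
    [IsLocallyFiniteMeasure ν] : Integrable h ν := by
  obtain ⟨B, hB⟩ := hh.exists_abs_le
  rw [← indicator_eq_self.2 fun x hx => not_not.1 fun hxQ => hx (hh.1 x hxQ),
    integrable_indicator_iff (measurableSet_set Q)]
  exact Measure.integrableOn_of_bounded (measure_set_lt_top ν Q).ne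
    hh.2.measurable.aestronglyMeasurable (.of_forall fun x => (Real.norm_eq_abs _).trans_le (hB x))

end GenHaar

namespace DyadicCube

variable {d : ℕ} {ω : TransParam d} {ν : Measure (Fin d → ℝ)} {C : DyadicCube d} {k : ℤ}
  {f g h : (Fin d → ℝ) → ℝ}

lemma avg_congr (hfg : ∀ x ∈ C.set ω, f x = g x) : avg ω ν C f = avg ω ν C g := by
  rw [avg, avg, setIntegral_congr_fun (measurableSet_set C) hfg]

lemma avg_const_mul (c : ℝ) : avg ω ν C (fun x => c * f x) = c * avg ω ν C f := by
  rw [avg, avg, integral_const_mul]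
  ring

lemma avg_eq_zero_of_forall_eq_zero (hf : ∀ x ∈ C.set ω, f x = 0) : avg ω ν C f = 0 := by
  rw [avg_congr hf]
  simp [avg]

-- On a `ν`-null cube `avg` is `0` rather than an average; a.e. point lies in no such cube.
lemma ae_measure_cubeAt_ne_zero : ∀ᵐ x ∂ν, ∀ k, ν ((cubeAt ω k x).set ω) ≠ 0 := by
  have : ∀ᵐ x ∂ν, ∀ C : DyadicCube d, x ∈ C.set ω → ν (C.set ω) ≠ 0 := by
    refine ae_all_iff.2 fun C => ?_
    rcases eq_or_ne (ν (C.set ω)) 0 with h0 | h0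
    · filter_upwards [measure_eq_zero_iff_ae_notMem.1 h0] with x hx hxC using absurd hxC hx
    · exact .of_forall fun _ _ => h0
  filter_upwards [this] with x hx k using hx _ (mem_cubeAt k x)

-- `scaleAvg ω ν k g = Σ_{ℓ(C) = 2^k} E^ν_C g`
def scaleAvg (ω : TransParam d) (ν : Measure (Fin d → ℝ)) (k : ℤ) (g : (Fin d → ℝ) → ℝ) :
    (Fin d → ℝ) → ℝ :=
  fun x => avg ω ν (cubeAt ω k x) g

lemma constOnScale_scaleAvg : ConstOnScale ω k (scaleAvg ω ν k g) := fun x y hxy => by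
  simp only [scaleAvg, hxy]

lemma measurable_scaleAvg : Measurable (scaleAvg ω ν k g) :=
  constOnScale_scaleAvg.measurable

variable [IsLocallyFiniteMeasure ν]

lemma avg_eq_of_forall_eq {a : ℝ} (hf : ∀ x ∈ C.set ω, f x = a) (h0 : ν (C.set ω) ≠ 0) :
    avg ω ν C f = a := by
  have h0' : (ν (C.set ω)).toReal ≠ 0 := ENNReal.toReal_ne_zero.2 ⟨h0, (measure_set_lt_top ν C).ne⟩
  rw [avg_congr hf, avg, setIntegral_const, smul_eq_mul, measureReal_def, ← mul_assoc,
    inv_mul_cancel₀ h0', one_mul]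

lemma avg_mul_measureReal (f : (Fin d → ℝ) → ℝ) :
    avg ω ν C f * ν.real (C.set ω) = ∫ x in C.set ω, f x ∂ν := by
  rcases eq_or_ne (ν (C.set ω)) 0 with h0 | h0
  · simp [measureReal_def, h0, Measure.restrict_eq_zero.2 h0]
  · have h0' : ν.real (C.set ω) ≠ 0 :=
      ENNReal.toReal_ne_zero.2 ⟨h0, (measure_set_lt_top ν C).ne⟩
    rw [avg, ← measureReal_def, inv_mul_eq_div, div_mul_cancel₀ _ h0']

lemma abs_avg_le {B : ℝ} (hf : ∀ x, |f x| ≤ B) : |avg ω ν C f| ≤ B := by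
  have hB : 0 ≤ B := (abs_nonneg _).trans (hf 0)
  rw [avg, abs_mul, abs_inv, ← measureReal_def, abs_of_nonneg measureReal_nonneg]
  rcases eq_or_ne (ν.real (C.set ω)) 0 with h0 | h0
  · simpa [h0] using hB
  · rw [inv_mul_le_iff₀ (measureReal_nonneg.lt_of_ne' h0), mul_comm]
    exact norm_setIntegral_le_of_norm_le_const (measure_set_lt_top ν C)
      fun x _ => (Real.norm_eq_abs _).trans_le (hf x)

lemma abs_scaleAvg_le {B : ℝ} (hg : ∀ x, |g x| ≤ B) (x : Fin d → ℝ) :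
    |scaleAvg ω ν k g x| ≤ B :=
  abs_avg_le hg

lemma scaleAvg_eq_self (hg : ConstOnScale ω k g) {x : Fin d → ℝ}
    (hx : ν ((cubeAt ω k x).set ω) ≠ 0) : scaleAvg ω ν k g x = g x :=
  avg_eq_of_forall_eq (fun _ hy => hg.eq_of_mem le_rfl hy (mem_cubeAt k x)) hx

lemma integral_scaleAvg_mul_of_constOnScale (hh : ConstOnScale ω k h) (hhi : Integrable h ν)
    (hg : Measurable g) {B : ℝ} (hgB : ∀ x, |g x| ≤ B) :
    ∫ x, scaleAvg ω ν k g x * h x ∂ν = ∫ x, g x * h x ∂ν := by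
  rw [integral_eq_tsum_setIntegral_mk (ω := ω) k
      (hhi.bdd_mul measurable_scaleAvg.aestronglyMeasurable (.of_forall (abs_scaleAvg_le hgB))),
    integral_eq_tsum_setIntegral_mk (ω := ω) k
      (hhi.bdd_mul hg.aestronglyMeasurable (.of_forall hgB))]
  refine tsum_congr fun m => ?_
  set C : DyadicCube d := ⟨k, m⟩
  have hC : ∀ y ∈ C.set ω, h y = h (corner ω C) := fun y hy =>
    hh.eq_of_mem le_rfl hy (corner_mem C)
  calc ∫ x in C.set ω, scaleAvg ω ν k g x * h x ∂ν
      = ∫ x in C.set ω, avg ω ν C g * h (corner ω C) ∂ν :=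
        setIntegral_congr_fun (measurableSet_set C) fun y hy => by
          rw [scaleAvg, cubeAt_eq_of_mem (Q := C) hy, hC y hy]
    _ = (∫ x in C.set ω, g x ∂ν) * h (corner ω C) := by
        rw [setIntegral_const, smul_eq_mul, ← avg_mul_measureReal]
        ring
    _ = ∫ x in C.set ω, g x * h x ∂ν := by
        rw [← integral_mul_const]
        exact setIntegral_congr_fun (measurableSet_set C) fun y hy => by rw [hC y hy]

end DyadicCube

namespace IsWeightedHaar

variable {d : ℕ} {ω : TransParam d} {μ : Measure (Fin d → ℝ)} {Q C : DyadicCube d}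
  {f h : (Fin d → ℝ) → ℝ}

lemma integrable [IsLocallyFiniteMeasure μ] (hf : IsWeightedHaar ω μ Q f) : Integrable f μ :=
  hf.1.integrable μ

lemma avg_eq_zero_of_le (hf : IsWeightedHaar ω μ Q f) (hk : Q.k ≤ C.k) : avg ω μ C f = 0 := by
  rcases subset_or_disjoint hk with hQC | hQC
  · rw [avg, setIntegral_eq_integral_of_forall_compl_eq_zero
      fun x hx => hf.1.1 x fun hxQ => hx (hQC hxQ), hf.2.1, mul_zero]
  · exact avg_eq_zero_of_forall_eq_zero fun x hx =>
      hf.1.1 x fun hxQ => Set.disjoint_left.1 hQC hxQ hx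

lemma avg_eq_zero_of_not_subset (hf : IsWeightedHaar ω μ Q f) (hC : ¬ C.set ω ⊆ Q.set ω) :
    avg ω μ C f = 0 := by
  rcases le_or_gt Q.k C.k with hk | hk
  · exact hf.avg_eq_zero_of_le hk
  · have hCQ := (subset_or_disjoint hk.le).resolve_left hC
    exact avg_eq_zero_of_forall_eq_zero fun x hx =>
      hf.1.1 x fun hxQ => Set.disjoint_left.1 hCQ hx hxQ

lemma integral_mul_eq_zero (hf : IsWeightedHaar ω μ Q f) {G : (Fin d → ℝ) → ℝ} {c : ℝ}
    (hG : ∀ x ∈ Q.set ω, G x = c) : ∫ x, G x * f x ∂μ = 0 := by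
  calc ∫ x, G x * f x ∂μ = ∫ x, c * f x ∂μ := by
        congr 1
        funext x
        by_cases hx : x ∈ Q.set ω
        · rw [hG x hx]
        · rw [hf.1.1 x hx, mul_zero, mul_zero]
    _ = 0 := by rw [integral_const_mul, hf.2.1, mul_zero]

lemma integral_scaleAvg_mul [IsLocallyFiniteMeasure μ] {g : (Fin d → ℝ) → ℝ}
    (hh : IsWeightedHaar ω μ Q h) (hg : Measurable g) {B : ℝ}
    (hgB : ∀ x, |g x| ≤ B) (k : ℤ) :
    ∫ x, scaleAvg ω μ k g x * h x ∂μ = if k < Q.k then ∫ x, g x * h x ∂μ else 0 := by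
  split_ifs with hk
  · exact integral_scaleAvg_mul_of_constOnScale (hh.1.2.mono (by omega)) hh.integrable hg hgB
  · exact hh.integral_mul_eq_zero fun x hx => by
      rw [scaleAvg, cubeAt_eq_cubeAt_of_mem hx (corner_mem Q) (not_lt.1 hk)]

end IsWeightedHaar

lemma abs_indicator_one_le {α : Type*} (s : Set α) (y : α) :
    |s.indicator (fun _ => (1 : ℝ)) y| ≤ 1 :=
  (norm_indicator_le_norm_self (f := fun _ => (1 : ℝ)) (s := s) (a := y)).trans_eq norm_one

namespace ElemShift

section Shift

variable {d : ℕ} {ω : TransParam d} {mm nn : ℕ} (S : ElemShift d ω mm nn)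

lemma mem_of_kernelAt_ne_zero {P : DyadicCube d} {x y : Fin d → ℝ} (h : S.kernelAt P x y ≠ 0) :
    P ∈ S.cubes ∧ x ∈ P.set ω ∧ y ∈ P.set ω := by
  unfold kernelAt at h
  split_ifs at h with hP
  · exact ⟨hP.1, hP.2.2 (mem_cubeAt _ x), hP.2.1 (mem_cubeAt _ y)⟩
  · exact absurd rfl h

lemma abs_kernelAt_le_one (P : DyadicCube d) (x y : Fin d → ℝ) : |S.kernelAt P x y| ≤ 1 := by
  unfold kernelAt
  split_ifs
  · rw [abs_mul]
    exact S.normBound _ _ _ x y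
  · simp

lemma kernelAt_congr_left (P : DyadicCube d) (y : Fin d → ℝ) {x x' : Fin d → ℝ}
    (hx : cubeAt ω (P.k - nn - 1) x = cubeAt ω (P.k - nn - 1) x') :
    S.kernelAt P x y = S.kernelAt P x' y := by
  have hD : cubeAt ω (P.k - nn) x = cubeAt ω (P.k - nn) x' :=
    cubeAt_eq_cubeAt_of_le (by omega) hx
  rw [kernelAt, kernelAt, hD,
    (S.haar2 P (cubeAt ω (P.k - mm) y) (cubeAt ω (P.k - nn) x')).2 x x' hx]

lemma kernelAt_congr_right (P : DyadicCube d) (x : Fin d → ℝ) {y y' : Fin d → ℝ}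
    (hy : cubeAt ω (P.k - mm - 1) y = cubeAt ω (P.k - mm - 1) y') :
    S.kernelAt P x y = S.kernelAt P x y' := by
  have hD : cubeAt ω (P.k - mm) y = cubeAt ω (P.k - mm) y' :=
    cubeAt_eq_cubeAt_of_le (by omega) hy
  rw [kernelAt, kernelAt, hD,
    (S.haar1 P (cubeAt ω (P.k - mm) y') (cubeAt ω (P.k - nn) x)).2 y y' hy]

lemma exists_forall_add_lt_k (hfin : S.cubes.Finite) :
    ∃ s : ℤ, ∀ P ∈ S.cubes, s + mm + nn < P.k := by
  obtain ⟨s, hs⟩ := (hfin.image fun P => P.k).bddBelow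
  exact ⟨s - mm - nn - 1, fun P hP => by have := hs (mem_image_of_mem _ hP); omega⟩

variable {S}

lemma constOnScale_kernel_left {s : ℤ} (hs : ∀ P ∈ S.cubes, s + mm + nn < P.k)
    (y : Fin d → ℝ) : ConstOnScale ω s (S.kernel · y) := fun x x' hxx' => by
  refine tsum_congr fun P => ?_
  by_cases hP : P ∈ S.cubes
  · rw [S.kernelAt_congr_left P y (cubeAt_eq_cubeAt_of_le (by have := hs P hP; omega) hxx')]
  · simp [kernelAt, hP]

lemma constOnScale_kernel_right {s : ℤ} (hs : ∀ P ∈ S.cubes, s + mm + nn < P.k)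
    (x : Fin d → ℝ) : ConstOnScale ω s (S.kernel x) := fun y y' hyy' => by
  refine tsum_congr fun P => ?_
  by_cases hP : P ∈ S.cubes
  · rw [S.kernelAt_congr_right P x (cubeAt_eq_cubeAt_of_le (by have := hs P hP; omega) hyy')]
  · simp [kernelAt, hP]

lemma constOnScale_op {s : ℤ} (hs : ∀ P ∈ S.cubes, s + mm + nn < P.k)
    (μ : Measure (Fin d → ℝ)) (φ : (Fin d → ℝ) → ℝ) : ConstOnScale ω s (S.op μ φ) :=
  fun x x' hxx' => by simp only [op, constOnScale_kernel_left hs _ x x' hxx']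

lemma measurable_op (hfin : S.cubes.Finite) (μ : Measure (Fin d → ℝ))
    (φ : (Fin d → ℝ) → ℝ) : Measurable (S.op μ φ) :=
  have ⟨_, hs⟩ := S.exists_forall_add_lt_k hfin
  (constOnScale_op hs μ φ).measurable

lemma kernel_eq_of_notMem {R A : DyadicCube d} (hRA : R.set ω ⊆ A.set ω) (hk : R.k + nn ≤ A.k)
    {x x' y : Fin d → ℝ} (hx : x ∈ R.set ω) (hx' : x' ∈ R.set ω) (hy : y ∉ A.set ω) :
    S.kernel x y = S.kernel x' y := by
  refine tsum_congr fun P => congrArg _ ?_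
  rcases lt_or_ge (R.k + nn) P.k with hP | hP
  · exact S.kernelAt_congr_left P y (cubeAt_eq_cubeAt_of_mem hx hx' (by omega))
  · -- a cube `P` this small that meets `R` lies inside `A`, so it does not reach `y`
    have hzero : ∀ z ∈ R.set ω, S.kernelAt P z y = 0 := fun z hz => by
      by_contra h
      obtain ⟨-, hzP, hyP⟩ := S.mem_of_kernelAt_ne_zero h
      rcases subset_or_disjoint (Q := P) (Q' := A) (by omega) with hPA | hPA
      · exact hy (hPA hyP)
      · exact Set.disjoint_left.1 hPA hzP (hRA hz)
    rw [hzero x hx, hzero x' hx']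

lemma op_eq_of_ae_eq_zero {R A : DyadicCube d} (hRA : R.set ω ⊆ A.set ω) (hk : R.k + nn ≤ A.k)
    (μ : Measure (Fin d → ℝ)) {φ : (Fin d → ℝ) → ℝ} (hφ : ∀ᵐ y ∂μ, y ∈ A.set ω → φ y = 0)
    {x x' : Fin d → ℝ} (hx : x ∈ R.set ω) (hx' : x' ∈ R.set ω) : S.op μ φ x = S.op μ φ x' :=
  integral_congr_ae <| hφ.mono fun y hy => by
    by_cases hyA : y ∈ A.set ω
    · simp [hy hyA]
    · simp only [kernel_eq_of_notMem hRA hk hx hx' hyA]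

variable (μ : Measure (Fin d → ℝ)) [IsLocallyFiniteMeasure μ]

lemma exists_integrable_bound_kernel (hfin : S.cubes.Finite) :
    ∃ w : (Fin d → ℝ) → ℝ, Integrable w μ ∧ ∀ x y, |S.kernel x y| ≤ w y := by
  refine ⟨fun y => ∑ P ∈ hfin.toFinset, (P.set ω).indicator (fun _ => (vol P)⁻¹) y,
    integrable_finsetSum _ fun P _ => (integrable_indicator_iff (measurableSet_set P)).2
      (integrableOn_const (measure_set_lt_top μ P).ne), fun x y => ?_⟩
  rw [kernel, tsum_eq_sum (s := hfin.toFinset) fun P hP => by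
    simp [kernelAt, show P ∉ S.cubes by simpa using hP]]
  refine (Finset.abs_sum_le_sum_abs _ _).trans (Finset.sum_le_sum fun P _ => ?_)
  have hvol : 0 < (vol P)⁻¹ := inv_pos.2 (by unfold vol; positivity)
  by_cases hy : y ∈ P.set ω
  · rw [indicator_of_mem hy, abs_mul, abs_of_pos hvol]
    exact mul_le_of_le_one_right hvol.le (S.abs_kernelAt_le_one P x y)
  · have : S.kernelAt P x y = 0 := by
      by_contra h
      exact hy (S.mem_of_kernelAt_ne_zero h).2.2
    simp [this, hy]

lemma integrable_kernel_mul (hfin : S.cubes.Finite) (x : Fin d → ℝ) {φ : (Fin d → ℝ) → ℝ}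
    (hφ : Measurable φ) {B : ℝ} (hφB : ∀ y, |φ y| ≤ B) :
    Integrable (fun y => S.kernel x y * φ y) μ := by
  obtain ⟨w, hw, hkw⟩ := S.exists_integrable_bound_kernel μ hfin
  obtain ⟨_, hs⟩ := S.exists_forall_add_lt_k hfin
  exact (hw.mono' (constOnScale_kernel_right hs x).measurable.aestronglyMeasurable
    (.of_forall (hkw x))).mul_bdd hφ.aestronglyMeasurable (.of_forall hφB)

lemma exists_abs_op_le (hfin : S.cubes.Finite) :
    ∃ M, ∀ (φ : (Fin d → ℝ) → ℝ) (B : ℝ), (∀ y, |φ y| ≤ B) → ∀ x, |S.op μ φ x| ≤ M * B := by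
  obtain ⟨w, hw, hkw⟩ := S.exists_integrable_bound_kernel μ hfin
  refine ⟨∫ y, w y ∂μ, fun φ B hφB x => ?_⟩
  calc |S.op μ φ x| ≤ ∫ y, ‖S.kernel x y * φ y‖ ∂μ :=
        (Real.norm_eq_abs _).symm.trans_le (norm_integral_le_integral_norm _)
    _ ≤ ∫ y, w y * B ∂μ := by
        refine integral_mono_of_nonneg (.of_forall fun _ => norm_nonneg _) (hw.mul_const B)
          (.of_forall fun y => ?_)
        dsimp only
        rw [norm_mul, Real.norm_eq_abs, Real.norm_eq_abs]
        exact mul_le_mul (hkw x y) (hφB y) (abs_nonneg _) ((abs_nonneg _).trans (hkw x y))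
    _ = (∫ y, w y ∂μ) * B := integral_mul_const B w

lemma integrable_op_mul (hfin : S.cubes.Finite) {ν : Measure (Fin d → ℝ)}
    {h : (Fin d → ℝ) → ℝ} (hh : Integrable h ν) {φ : (Fin d → ℝ) → ℝ} {B : ℝ}
    (hφB : ∀ y, |φ y| ≤ B) : Integrable (fun x => S.op μ φ x * h x) ν :=
  have ⟨_, hM⟩ := S.exists_abs_op_le μ hfin
  hh.bdd_mul (measurable_op hfin μ φ).aestronglyMeasurable (.of_forall (hM φ B hφB))

lemma op_sub_const_mul (hfin : S.cubes.Finite) {φ ψ : (Fin d → ℝ) → ℝ} (hφ : Measurable φ)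
    {B : ℝ} (hφB : ∀ y, |φ y| ≤ B) (hψ : Measurable ψ) {B' : ℝ} (hψB : ∀ y, |ψ y| ≤ B')
    (c : ℝ) (x : Fin d → ℝ) :
    S.op μ (fun y => φ y - c * ψ y) x = S.op μ φ x - c * S.op μ ψ x := by
  rw [op, op, op, ← integral_const_mul, ← integral_sub (S.integrable_kernel_mul μ hfin x hφ hφB)
    ((S.integrable_kernel_mul μ hfin x hψ hψB).const_mul c)]
  congr 1
  funext y
  ring

theorem integral_op_mul_weightedHaar (hfin : S.cubes.Finite) {ν : Measure (Fin d → ℝ)}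
    [IsLocallyFiniteMeasure ν] {Q R A : DyadicCube d} {f h : (Fin d → ℝ) → ℝ}
    (hf : IsWeightedHaar ω μ Q f) (hh : IsWeightedHaar ω ν R h) (hRA : R.set ω ⊆ A.set ω)
    (hk : R.k + nn ≤ A.k) (hAQ : A.k < Q.k) :
    ∫ x, S.op μ f x * h x ∂ν =
      avg ω μ A f * ∫ x, S.op μ ((A.set ω).indicator fun _ => 1) x * h x ∂ν := by
  set c := avg ω μ A f
  set χ : (Fin d → ℝ) → ℝ := (A.set ω).indicator fun _ => 1
  obtain ⟨B, hB⟩ := hf.1.exists_abs_le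
  have hχ : ∀ y, |χ y| ≤ 1 := abs_indicator_one_le _
  -- `f` is constant on `A`, so the shift of `f - c χ` is constant on `R`
  have hfA : ∀ᵐ y ∂μ, y ∈ A.set ω → f y - c * χ y = 0 := by
    rcases eq_or_ne (μ (A.set ω)) 0 with h0 | h0
    · filter_upwards [measure_eq_zero_iff_ae_notMem.1 h0] with y hy hyA using absurd hyA hy
    · refine .of_forall fun y hy => ?_
      have hc : c = f y := avg_eq_of_forall_eq (fun z hz => hf.1.2.eq_of_mem (by omega) hz hy) h0
      simp [hc, χ, hy]
  have hconst : ∀ x ∈ R.set ω, S.op μ f x - c * S.op μ χ x =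
      S.op μ (fun y => f y - c * χ y) (corner ω R) := fun x hx => by
    rw [← S.op_sub_const_mul μ hfin hf.1.2.measurable hB
      (measurable_const.indicator (measurableSet_set A)) hχ]
    exact op_eq_of_ae_eq_zero hRA hk μ hfA hx (corner_mem R)
  have h0 := hh.integral_mul_eq_zero hconst
  rwa [show (fun x => (S.op μ f x - c * S.op μ χ x) * h x) =
      fun x => S.op μ f x * h x - c * (S.op μ χ x * h x) by funext x; ring,
    integral_sub (S.integrable_op_mul μ hfin hh.integrable hB)
      ((S.integrable_op_mul μ hfin hh.integrable hχ).const_mul c),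
    integral_const_mul, sub_eq_zero] at h0

end Shift

section Paraproduct

variable {d : ℕ} {ω : TransParam d} {mm nn : ℕ} {S : ElemShift d ω mm nn}
  {μ ν : Measure (Fin d → ℝ)} {r : ℕ} {f h : (Fin d → ℝ) → ℝ}

-- The summands of `shiftPara` for the cubes of side `2^k`: at `x` only `cubeAt ω k x` counts.
def paraTerm (S : ElemShift d ω mm nn) (μ ν : Measure (Fin d → ℝ)) (r : ℕ)
    (f : (Fin d → ℝ) → ℝ) (k : ℤ) : (Fin d → ℝ) → ℝ := fun x =>
  eproj ω μ (cubeAt ω k x) f x *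
    mdiff ω ν (cubeAt ω (k - r) x) (S.op μ (((cubeAt ω k x).set ω).indicator fun _ => 1)) x

-- `Σ_{ℓ(P) = 2^k} 1_P ⬝ (E^μ_P f) ⬝ 𝕊_μ 1_P`
def paraLocal (S : ElemShift d ω mm nn) (μ : Measure (Fin d → ℝ)) (f : (Fin d → ℝ) → ℝ)
    (k : ℤ) : (Fin d → ℝ) → ℝ := fun y =>
  avg ω μ (cubeAt ω k y) f * S.op μ (((cubeAt ω k y).set ω).indicator fun _ => 1) y

lemma shiftPara_eq_tsum_paraTerm (x : Fin d → ℝ) :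
    shiftPara S μ ν r f x = ∑' k, S.paraTerm μ ν r f k x := by
  refine (Function.Injective.tsum_eq (g := fun k => cubeAt ω k x)
    (fun k k' h => congrArg DyadicCube.k h) fun Q hQ => ?_).symm
  have hx : x ∈ Q.set ω := by
    by_contra hx
    exact hQ (by simp [eproj, hx])
  exact ⟨Q.k, cubeAt_eq_of_mem hx⟩

lemma scaleAvg_paraLocal {j k : ℤ} (hjk : j ≤ k) (x : Fin d → ℝ) :
    scaleAvg ω ν j (S.paraLocal μ f k) x = avg ω μ (cubeAt ω k x) f *
      avg ω ν (cubeAt ω j x) (S.op μ (((cubeAt ω k x).set ω).indicator fun _ => 1)) := by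
  rw [scaleAvg, ← avg_const_mul]
  exact avg_congr fun y hy => by rw [paraLocal, cubeAt_eq_cubeAt_of_le hjk (mem_cubeAt_iff.1 hy)]

lemma paraTerm_eq_sub (k : ℤ) : S.paraTerm μ ν r f k =
    scaleAvg ω ν (k - r - 1) (S.paraLocal μ f k) - scaleAvg ω ν (k - r) (S.paraLocal μ f k) := by
  funext x
  rw [Pi.sub_apply, scaleAvg_paraLocal (by omega), scaleAvg_paraLocal (by omega), ← mul_sub,
    paraTerm, eproj, mdiff, if_pos (mem_cubeAt _ x), if_pos (mem_cubeAt _ x)]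
  rfl

lemma constOnScale_paraLocal {s : ℤ} (hs : ∀ P ∈ S.cubes, s + mm + nn < P.k) {j k : ℤ}
    (hjk : j ≤ k) (hjs : j ≤ s) : ConstOnScale ω j (S.paraLocal μ f k) := fun x y hxy => by
  rw [paraLocal, paraLocal, cubeAt_eq_cubeAt_of_le hjk hxy]
  exact congrArg _ ((constOnScale_op hs μ _).mono hjs x y hxy)

lemma measurable_paraLocal (hfin : S.cubes.Finite) (k : ℤ) :
    Measurable (S.paraLocal μ f k) :=
  have ⟨_, hs⟩ := S.exists_forall_add_lt_k hfin
  (constOnScale_paraLocal hs (min_le_left k _) (min_le_right k _)).measurable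

lemma paraLocal_eq_zero_of_le {Q : DyadicCube d} (hf : IsWeightedHaar ω μ Q f) {k : ℤ}
    (hk : Q.k ≤ k) : S.paraLocal μ f k = 0 :=
  funext fun y => by rw [paraLocal, hf.avg_eq_zero_of_le hk, zero_mul, Pi.zero_apply]

lemma ae_paraTerm_eq_zero [IsLocallyFiniteMeasure ν] {s : ℤ}
    (hs : ∀ P ∈ S.cubes, s + mm + nn < P.k) {Q : DyadicCube d} (hf : IsWeightedHaar ω μ Q f) :
    ∀ᵐ x ∂ν, ∀ k ∉ Finset.Ioo (s + r) Q.k, S.paraTerm μ ν r f k x = 0 := by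
  filter_upwards [ae_measure_cubeAt_ne_zero] with x hx k hk
  rw [paraTerm_eq_sub, Pi.sub_apply, sub_eq_zero]
  rcases le_or_gt Q.k k with hQk | hkQ
  · simp [scaleAvg, paraLocal_eq_zero_of_le hf hQk, avg]
  · have hF := constOnScale_paraLocal (μ := μ) (f := f) hs (j := k - r) (k := k) (by omega)
      (by simp only [Finset.mem_Ioo, not_and_or, not_lt] at hk; omega)
    rw [scaleAvg_eq_self (hF.mono (by omega)) (hx _), scaleAvg_eq_self hF (hx _)]

lemma integral_paraLocal_mul {R : DyadicCube d} (hh : IsWeightedHaar ω ν R h) {k : ℤ}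
    (hk : R.k ≤ k) : ∫ x, S.paraLocal μ f k x * h x ∂ν = avg ω μ (cubeAt ω k (corner ω R)) f *
      ∫ x, S.op μ (((cubeAt ω k (corner ω R)).set ω).indicator fun _ => 1) x * h x ∂ν := by
  rw [← integral_const_mul]
  congr 1
  funext x
  by_cases hx : x ∈ R.set ω
  · rw [paraLocal, cubeAt_eq_cubeAt_of_mem hx (corner_mem R) hk, mul_assoc]
  · simp only [hh.1.1 x hx, mul_zero]

variable [IsLocallyFiniteMeasure μ] [IsLocallyFiniteMeasure ν]

lemma exists_abs_paraLocal_le (hfin : S.cubes.Finite) {B : ℝ} (hfB : ∀ y, |f y| ≤ B) :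
    ∃ C, ∀ k y, |S.paraLocal μ f k y| ≤ C := by
  obtain ⟨M, hM⟩ := S.exists_abs_op_le μ hfin
  refine ⟨B * (M * 1), fun k y => ?_⟩
  rw [paraLocal, abs_mul]
  exact mul_le_mul (abs_avg_le hfB) (hM _ 1 (abs_indicator_one_le _) y) (abs_nonneg _)
    ((abs_nonneg _).trans (hfB y))

lemma integrable_scaleAvg_paraLocal_mul (hfin : S.cubes.Finite) {B : ℝ}
    (hfB : ∀ y, |f y| ≤ B) (hh : Integrable h ν) (j k : ℤ) :
    Integrable (fun x => scaleAvg ω ν j (S.paraLocal μ f k) x * h x) ν :=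
  have ⟨_, hC⟩ := exists_abs_paraLocal_le (μ := μ) hfin hfB
  hh.bdd_mul measurable_scaleAvg.aestronglyMeasurable (.of_forall (abs_scaleAvg_le (hC k)))

lemma integrable_paraTerm_mul (hfin : S.cubes.Finite) {B : ℝ} (hfB : ∀ y, |f y| ≤ B)
    (hh : Integrable h ν) (k : ℤ) : Integrable (fun x => S.paraTerm μ ν r f k x * h x) ν := by
  simp only [paraTerm_eq_sub, Pi.sub_apply, sub_mul]
  exact (integrable_scaleAvg_paraLocal_mul hfin hfB hh _ k).sub
    (integrable_scaleAvg_paraLocal_mul hfin hfB hh _ k)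

lemma integral_paraTerm_mul (hfin : S.cubes.Finite) {B : ℝ} (hfB : ∀ y, |f y| ≤ B)
    {R : DyadicCube d} (hh : IsWeightedHaar ω ν R h) (k : ℤ) :
    ∫ x, S.paraTerm μ ν r f k x * h x ∂ν =
      if k = R.k + r then ∫ x, S.paraLocal μ f k x * h x ∂ν else 0 := by
  obtain ⟨C, hC⟩ := exists_abs_paraLocal_le (μ := μ) hfin hfB
  simp only [paraTerm_eq_sub, Pi.sub_apply, sub_mul]
  rw [integral_sub (integrable_scaleAvg_paraLocal_mul hfin hfB hh.integrable _ k)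
      (integrable_scaleAvg_paraLocal_mul hfin hfB hh.integrable _ k),
    hh.integral_scaleAvg_mul (measurable_paraLocal hfin k) (hC k),
    hh.integral_scaleAvg_mul (measurable_paraLocal hfin k) (hC k)]
  split_ifs <;> first | omega | simp

theorem integral_shiftPara_mul (hfin : S.cubes.Finite) {Q R : DyadicCube d}
    (hf : IsWeightedHaar ω μ Q f) (hh : IsWeightedHaar ω ν R h) :
    ∫ x, shiftPara S μ ν r f x * h x ∂ν = avg ω μ (cubeAt ω (R.k + r) (corner ω R)) f *
      ∫ x, S.op μ (((cubeAt ω (R.k + r) (corner ω R)).set ω).indicator fun _ => 1) x * h x ∂ν := by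
  obtain ⟨s, hs⟩ := S.exists_forall_add_lt_k hfin
  obtain ⟨B, hB⟩ := hf.1.exists_abs_le
  let K := insert (R.k + (r : ℤ)) (Finset.Ioo (s + r) Q.k)
  have hae : ∀ᵐ x ∂ν, shiftPara S μ ν r f x * h x = ∑ k ∈ K, S.paraTerm μ ν r f k x * h x := by
    filter_upwards [ae_paraTerm_eq_zero hs hf] with x hx
    rw [shiftPara_eq_tsum_paraTerm, ← Finset.sum_mul,
      tsum_eq_sum fun k hk => hx k fun hk' => hk (Finset.mem_insert_of_mem hk')]
  rw [integral_congr_ae hae,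
    integral_finsetSum _ fun k _ => integrable_paraTerm_mul hfin hB hh.integrable k,
    Finset.sum_congr rfl fun k _ => integral_paraTerm_mul hfin hB hh k, Finset.sum_ite_eq',
    if_pos (Finset.mem_insert_self _ _), integral_paraLocal_mul hh (by omega)]

end Paraproduct

end ElemShift

theorem statement2_general (d : ℕ) (ω : TransParam d) (mm nn : ℕ)
    (S : ElemShift d ω mm nn) (hfin : S.cubes.Finite)
    (μ ν : Measure (Fin d → ℝ)) [IsLocallyFiniteMeasure μ] [IsLocallyFiniteMeasure ν]
    (r : ℕ) (hr : nn ≤ r)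
    (Q R : DyadicCube d) (hQ hR : (Fin d → ℝ) → ℝ)
    (hhQ : IsWeightedHaar ω μ Q hQ) (hhR : IsWeightedHaar ω ν R hR) :
    (Q.k - (r : ℤ) ≤ R.k → (∫ x, shiftPara S μ ν r hQ x * hR x ∂ν) = 0) ∧
    (¬ R.set ω ⊆ Q.set ω → (∫ x, shiftPara S μ ν r hQ x * hR x ∂ν) = 0) ∧
    (R.k < Q.k - (r : ℤ) →
      ((∫ x, shiftPara S μ ν r hQ x * hR x ∂ν) = ∫ x, S.op μ hQ x * hR x ∂ν) ∧
      (¬ R.set ω ⊆ Q.set ω → (∫ x, S.op μ hQ x * hR x ∂ν) = 0)) := by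
  set A := cubeAt ω (R.k + r) (corner ω R)
  have hRA : R.set ω ⊆ A.set ω := set_subset_set_cubeAt_corner R (by omega)
  have hpara := ElemShift.integral_shiftPara_mul (r := r) hfin hhQ hhR
  have havg : ¬ R.set ω ⊆ Q.set ω → avg ω μ A hQ = 0 := fun hRQ =>
    hhQ.avg_eq_zero_of_not_subset fun hAQ => hRQ (hRA.trans hAQ)
  refine ⟨fun hk => ?_, fun hRQ => by rw [hpara, havg hRQ, zero_mul], fun hk => ?_⟩
  · rw [hpara, hhQ.avg_eq_zero_of_le (show Q.k ≤ R.k + r by omega), zero_mul]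
  · have hop := ElemShift.integral_op_mul_weightedHaar μ hfin hhQ hhR hRA
      (show R.k + nn ≤ R.k + r by omega) (show R.k + r < Q.k by omega)
    exact ⟨hpara.trans hop.symm, fun hRQ => by rw [hop, havg hRQ, zero_mul]⟩

/-- **structure of the weighted paraproduct, Lemma 2.2.** For `r ≥ nn` and
weighted Haar functions `h^μ_Q`, `h^ν_R`: (1) if `ℓ(R) ≥ 2^{-r}ℓ(Q)` then
`⟨Π^μ h^μ_Q, h^ν_R⟩_ν = 0`; (2) if `R ⊄ Q` then `⟨Π^μ h^μ_Q, h^ν_R⟩_ν = 0`; (3) if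
`ℓ(R) < 2^{-r}ℓ(Q)` then `⟨Π^μ h^μ_Q, h^ν_R⟩_ν = ⟨𝕊_μ h^μ_Q, h^ν_R⟩_ν`, and in particular
both sides vanish when `R ⊄ Q`. -/
theorem statement2 (d : ℕ) (hd : 0 < d) (ω : TransParam d) (mm nn : ℕ)
    (S : ElemShift d ω mm nn) (hfin : S.cubes.Finite)
    (μ ν : Measure (Fin d → ℝ)) [IsLocallyFiniteMeasure μ] [IsLocallyFiniteMeasure ν]
    (r : ℕ) (hr : nn ≤ r)
    (Q R : DyadicCube d) (hQ hR : (Fin d → ℝ) → ℝ)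
    (hhQ : IsWeightedHaar ω μ Q hQ) (hhR : IsWeightedHaar ω ν R hR) :
    (Q.k - (r : ℤ) ≤ R.k → (∫ x, shiftPara S μ ν r hQ x * hR x ∂ν) = 0) ∧
    (¬ R.set ω ⊆ Q.set ω → (∫ x, shiftPara S μ ν r hQ x * hR x ∂ν) = 0) ∧
    (R.k < Q.k - (r : ℤ) →
      ((∫ x, shiftPara S μ ν r hQ x * hR x ∂ν) = ∫ x, S.op μ hQ x * hR x ∂ν) ∧
      (¬ R.set ω ⊆ Q.set ω → (∫ x, S.op μ hQ x * hR x ∂ν) = 0)) :=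
  statement2_general d ω mm nn S hfin μ ν r hr Q R hQ hR hhQ hhR

end
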